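/- arXiv:1602.05117 — 2 statements merged into one kernel-verified Lean document; each statement's English description precedes it below -/
import Mathlib

section
/- Let a, b, c, d, α, β be positive real numbers such that a ≤ c, b ≤ d, βd ≤ αb, and such that ψ(a+bt) > 0 and ψ(c+dt) > 0 for all t ∈ [0,∞). Then for every t ∈ (1,∞), [ψ(a+bt)]^α/[ψ(c+dt)]^β ≥ [ψ(a+b)]^α/[ψ(c+d)]^β. -/
/-!
On `(0, ∞)` the digamma function is increasing, because `log Γ` is convex, and concave, because
`ψ x = ψ (x + N) - ∑_{n < N} (x + n)⁻¹` with `ψ (y + N) - ψ (x + N) → 0` exhibits it as a limit of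
concave functions. So `G = log ∘ ψ` is increasing and concave on `[a + b, ∞)`, where `ψ > 0`.
As `a + b ≤ c + d` and `a + b t ≤ c + d t`, the chord of `G` over `[c + d, c + d t]` is no steeper
than the one over `[a + b, a + b t]`, whence
`β (G (c + d t) - G (c + d)) ≤ β d (t - 1) σ ≤ α b (t - 1) σ = α (G (a + b t) - G (a + b))`
with `σ ≥ 0` the latter slope; exponentiate.
-/

open Real Filter Set Topology

/-- The digamma (psi) function: logarithmic derivative of the Gamma function. -/
noncomputable def psi (t : ℝ) : ℝ := deriv Real.Gamma t / Real.Gamma t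

lemma hasDerivAt_log_Gamma {x : ℝ} (hx : 0 < x) : HasDerivAt (log ∘ Gamma) (psi x) x :=
  (differentiableAt_Gamma fun m => by linarith [(m.cast_nonneg : (0 : ℝ) ≤ m)]).hasDerivAt.log
    (Gamma_pos_of_pos hx).ne'

lemma monotoneOn_psi : MonotoneOn psi (Ioi 0) :=
  (convexOn_log_Gamma.monotoneOn_deriv fun _ hx => (hasDerivAt_log_Gamma hx).differentiableAt).congr
    fun _ hx => (hasDerivAt_log_Gamma hx).deriv

lemma psi_add_one {x : ℝ} (hx : 0 < x) : psi (x + 1) = psi x + x⁻¹ := by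
  have h₁ : HasDerivAt (fun y => log (Gamma (y + 1))) (psi (x + 1)) x :=
    (hasDerivAt_log_Gamma (by linarith)).comp_add_const x 1
  have h₂ : HasDerivAt (fun y => log (Gamma y) + log y) (psi x + x⁻¹) x :=
    (hasDerivAt_log_Gamma hx).add (hasDerivAt_log hx.ne')
  refine h₁.unique (h₂.congr_of_eventuallyEq ?_)
  filter_upwards [eventually_gt_nhds hx] with y hy
  rw [Gamma_add_one hy.ne', log_mul hy.ne' (Gamma_pos_of_pos hy).ne', add_comm]

lemma psi_add_nat {x : ℝ} (hx : 0 < x) (N : ℕ) :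
    psi (x + N) = psi x + ∑ n ∈ Finset.range N, (x + n)⁻¹ := by
  induction N with
  | zero => simp
  | succ N ih =>
    rw [Nat.cast_succ, ← add_assoc, psi_add_one (by positivity), ih, Finset.sum_range_succ,
      add_assoc]

lemma tendsto_psi_add_nat_sub_of_le {x y : ℝ} (hx : 0 < x) (hxy : x ≤ y) :
    Tendsto (fun N : ℕ => psi (y + N) - psi (x + N)) atTop (𝓝 0) := by
  obtain ⟨m, hm⟩ := exists_nat_ge (y - x)
  have hmem (z : ℝ) (N : ℕ) (hz : x ≤ z) : z + N ∈ Ioi 0 := by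
    rw [mem_Ioi]; linarith [(N.cast_nonneg : (0 : ℝ) ≤ N)]
  have hlower (N : ℕ) : 0 ≤ psi (y + N) - psi (x + N) :=
    sub_nonneg.2 <| monotoneOn_psi (hmem x N le_rfl) (hmem y N hxy) (by linarith)
  have hupper (N : ℕ) : psi (y + N) - psi (x + N) ≤ m * (x + N)⁻¹ := by
    have hxN : 0 < x + N := hmem x N le_rfl
    calc psi (y + N) - psi (x + N) ≤ psi (x + N + m) - psi (x + N) := by
          gcongr
          exact monotoneOn_psi (hmem y N hxy) (by rw [add_right_comm]; exact hmem _ _ (by simp))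
            (by linarith)
      _ = ∑ n ∈ Finset.range m, (x + N + n)⁻¹ := by rw [psi_add_nat hxN, add_sub_cancel_left]
      _ ≤ m * (x + N)⁻¹ := by
          simpa using Finset.sum_le_card_nsmul (Finset.range m) _ _ fun n _ =>
            inv_anti₀ hxN (le_add_of_nonneg_right n.cast_nonneg)
  have hlim : Tendsto (fun N : ℕ => (m : ℝ) * (x + N)⁻¹) atTop (𝓝 0) := by
    simpa using tendsto_const_nhds.mul
      (tendsto_inv_atTop_zero.comp (tendsto_atTop_add_const_left _ x tendsto_natCast_atTop_atTop))
  exact squeeze_zero hlower hupper hlim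

lemma tendsto_psi_add_nat_sub {x y : ℝ} (hx : 0 < x) (hy : 0 < y) :
    Tendsto (fun N : ℕ => psi (y + N) - psi (x + N)) atTop (𝓝 0) := by
  rcases le_total x y with hxy | hyx
  · exact tendsto_psi_add_nat_sub_of_le hx hxy
  · simpa using (tendsto_psi_add_nat_sub_of_le hy hyx).neg

lemma concaveOn_psi : ConcaveOn ℝ (Ioi 0) psi := by
  refine ⟨convex_Ioi 0, fun x hx y hy a b ha hb hab => ?_⟩
  have hz := convex_Ioi (0 : ℝ) hx hy ha hb hab
  simp only [smul_eq_mul, mem_Ioi] at hx hy hz ⊢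
  set z := a * x + b * y
  have hinv (n : ℕ) : (z + n)⁻¹ ≤ a * (x + n)⁻¹ + b * (y + n)⁻¹ := by
    have := (convexOn_zpow (𝕜 := ℝ) (-1)).2 (x := x + n) (y := y + n) (by simp; positivity)
      (by simp; positivity) ha hb hab
    simp only [zpow_neg_one, smul_eq_mul] at this
    rwa [show z + n = a * (x + n) + b * (y + n) by linear_combination (-n : ℝ) * hab]
  have hN (N : ℕ) : a * psi x + b * psi y - psi z ≤
      a * (psi (x + N) - psi (z + N)) + b * (psi (y + N) - psi (z + N)) := by
    have hsum : ∑ n ∈ Finset.range N, (z + n)⁻¹ ≤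
        a * ∑ n ∈ Finset.range N, (x + n)⁻¹ + b * ∑ n ∈ Finset.range N, (y + n)⁻¹ := by
      rw [Finset.mul_sum, Finset.mul_sum, ← Finset.sum_add_distrib]
      exact Finset.sum_le_sum fun n _ => hinv n
    rw [psi_add_nat hx, psi_add_nat hy, psi_add_nat hz]
    linear_combination hsum + (psi z + ∑ n ∈ Finset.range N, (z + n)⁻¹) * hab
  have hlim := ((tendsto_psi_add_nat_sub hz hx).const_mul a).add
    ((tendsto_psi_add_nat_sub hz hy).const_mul b)
  rw [mul_zero, mul_zero, add_zero] at hlim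
  linarith [ge_of_tendsto' hlim hN]

lemma ConcaveOn.log_comp {E : Type*} [AddCommMonoid E] [Module ℝ E] {s : Set E} {f : E → ℝ}
    (hf : ConcaveOn ℝ s f) (hpos : ∀ x ∈ s, 0 < f x) : ConcaveOn ℝ s (log ∘ f) :=
  ⟨hf.1, fun x hx y hy a b ha hb hab => calc
    a • log (f x) + b • log (f y) ≤ log (a • f x + b • f y) :=
      strictConcaveOn_log_Ioi.concaveOn.2 (hpos x hx) (hpos y hy) ha hb hab
    _ ≤ log (f (a • x + b • y)) :=
      log_le_log (convex_Ioi (0 : ℝ) (hpos x hx) (hpos y hy) ha hb hab) (hf.2 hx hy ha hb hab)⟩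

section Slope

variable {𝕜 : Type*} [Field 𝕜] [LinearOrder 𝕜] [IsStrictOrderedRing 𝕜] {s : Set 𝕜} {f : 𝕜 → 𝕜}
  {x x' y y' : 𝕜}

lemma ConcaveOn.slope_le_slope (hf : ConcaveOn 𝕜 s f) (hx : x ∈ s) (hx' : x' ∈ s) (hy : y ∈ s)
    (hy' : y' ∈ s) (hxx' : x < x') (hyy' : y < y') (hxy : x ≤ y) (hxy' : x' ≤ y') :
    slope f y y' ≤ slope f x x' := calc
  slope f y y' = slope f y' y := slope_comm ..
  _ ≤ slope f y' x := hf.slope_anti hy' ⟨hx, (hxy.trans_lt hyy').ne⟩ ⟨hy, hyy'.ne⟩ hxy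
  _ = slope f x y' := slope_comm ..
  _ ≤ slope f x x' := hf.slope_anti hx ⟨hx', hxx'.ne'⟩ ⟨hy', (hxx'.trans_le hxy').ne'⟩ hxy'

lemma ConcaveOn.mul_sub_le_mul_sub (hf : ConcaveOn 𝕜 s f) (hmono : MonotoneOn f s) (hx : x ∈ s)
    (hx' : x' ∈ s) (hy : y ∈ s) (hy' : y' ∈ s) (hxx' : x < x') (hyy' : y < y') (hxy : x ≤ y)
    (hxy' : x' ≤ y') {α β : 𝕜} (hβ : 0 ≤ β) (hαβ : β * (y' - y) ≤ α * (x' - x)) :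
    β * (f y' - f y) ≤ α * (f x' - f x) := calc
  β * (f y' - f y) = β * (y' - y) * slope f y y' := by
    rw [mul_assoc, ← smul_eq_mul (y' - y), sub_smul_slope, vsub_eq_sub]
  _ ≤ β * (y' - y) * slope f x x' :=
    mul_le_mul_of_nonneg_left (hf.slope_le_slope hx hx' hy hy' hxx' hyy' hxy hxy')
      (mul_nonneg hβ (sub_nonneg.2 hyy'.le))
  _ ≤ α * (x' - x) * slope f x x' := by gcongr; exact hmono.slope_nonneg hx hx'
  _ = α * (f x' - f x) := by rw [mul_assoc, ← smul_eq_mul (x' - x), sub_smul_slope, vsub_eq_sub]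

end Slope

lemma rpow_div_rpow_eq_exp {p q : ℝ} (hp : 0 < p) (hq : 0 < q) (α β : ℝ) :
    p ^ α / q ^ β = exp (α * log p - β * log q) := by
  rw [rpow_def_of_pos hp, rpow_def_of_pos hq, ← exp_sub, mul_comm α, mul_comm β]

theorem U_lower_bound_gt_one_general (a b c d α β : ℝ) (ha : 0 < a) (hb : 0 < b)
    (hd : 0 < d) (hβ : 0 < β) (hac : a ≤ c) (hbd : b ≤ d)
    (hβdαb : β * d ≤ α * b)
    (hpos : ∀ t : ℝ, 0 ≤ t → 0 < psi (a + b * t) ∧ 0 < psi (c + d * t))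
    (t : ℝ) (ht : t ∈ Set.Ioi (1 : ℝ)) :
    psi (a + b * t) ^ α / psi (c + d * t) ^ β ≥ psi (a + b) ^ α / psi (c + d) ^ β := by
  rw [mem_Ioi] at ht
  set s := Ici (a + b)
  have hs : s ⊆ Ioi 0 := Ici_subset_Ioi.2 (by positivity)
  have hψ : ∀ x ∈ s, 0 < psi x := fun x hx =>
    (by simpa using (hpos 1 zero_le_one).1 : 0 < psi (a + b)).trans_le
      (monotoneOn_psi (hs self_mem_Ici) (hs hx) hx)
  have hG : ConcaveOn ℝ s (log ∘ psi) := (concaveOn_psi.subset hs (convex_Ici _)).log_comp hψ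
  have hGm : MonotoneOn (log ∘ psi) s := fun x hx y hy hxy =>
    log_le_log (hψ x hx) (monotoneOn_psi (hs hx) (hs hy) hxy)
  have hx' : a + b * t ∈ s := by simp only [s, mem_Ici]; nlinarith
  have hy : c + d ∈ s := by simp only [s, mem_Ici]; linarith
  have hy' : c + d * t ∈ s := by simp only [s, mem_Ici]; nlinarith
  have key := hG.mul_sub_le_mul_sub (α := α) hGm self_mem_Ici hx' hy hy' (by nlinarith)
    (by nlinarith) (by linarith) (by nlinarith) hβ.le
    (by linarith [mul_le_mul_of_nonneg_right hβdαb (sub_nonneg.2 ht.le)])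
  simp only [Function.comp_apply] at key
  rw [rpow_div_rpow_eq_exp (hψ _ hx') (hψ _ hy'),
    rpow_div_rpow_eq_exp (hψ _ self_mem_Ici) (hψ _ hy), ge_iff_le, exp_le_exp]
  linarith

theorem U_lower_bound_gt_one (a b c d α β : ℝ) (ha : 0 < a) (hb : 0 < b) (hc : 0 < c)
    (hd : 0 < d) (hα : 0 < α) (hβ : 0 < β) (hac : a ≤ c) (hbd : b ≤ d)
    (hβdαb : β * d ≤ α * b)
    (hpos : ∀ t : ℝ, 0 ≤ t → 0 < psi (a + b * t) ∧ 0 < psi (c + d * t))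
    (t : ℝ) (ht : t ∈ Set.Ioi (1 : ℝ)) :
    psi (a + b * t) ^ α / psi (c + d * t) ^ β ≥ psi (a + b) ^ α / psi (c + d) ^ β :=
  U_lower_bound_gt_one_general a b c d α β ha hb hd hβ hac hbd hβdαb hpos t ht
end

section
/- Let k > 0, let n be a positive integer, and let a, b, α_1,…,α_n, β_1,…,β_n be real numbers with 0 < a ≤ b, α_i > 0, β_i > 0, and such that for all t ∈ [0,∞) and all i: at + α_i > 0, bt + β_i > 0, at + α_i ≤ bt + β_i, and ψ_k(at+α_i) > 0. Then for every t ∈ [0,1], ∏_{i=1}^n Γ_k(a+α_i)/Γ_k(b+β_i) ≤ ∏_{i=1}^n Γ_k(at+α_i)/Γ_k(bt+β_i) ≤ ∏_{i=1}^n Γ_k(α_i)/Γ_k(β_i). -/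
/-!
Substituting `x ↦ x ^ k` gives `Γ_k(t) = k ^ (t / k - 1) Γ(t / k)`, so `ψ_k` is the derivative of
`log Γ_k` as soon as the classical series for the digamma function `ψ = ψ_1` is known. That series
comes from differentiating the Euler–Gauss limit `log Γ(x) = lim (x log N + log N! - ∑ log (x + m))`
term by term: the derivatives converge locally uniformly. Convexity of `log Γ` makes `ψ_k`
increasing, so for `s ≥ 0` the derivative `a ψ_k(as + α) - b ψ_k(bs + β)` of
`log (Γ_k(as + α) / Γ_k(bs + β))` is `≤ 0` when `0 < ψ_k(as + α)` and `a ≤ b`. Each factor of the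
product is therefore positive and decreasing on `[0, ∞)`, and so is the product.
-/

open Real

/-- The k-Gamma function `Γ_k(t) = ∫₀^∞ e^{-x^k/k} x^{t-1} dx`. -/
noncomputable def gammak (k t : ℝ) : ℝ :=
  ∫ x in Set.Ioi (0 : ℝ), Real.exp (-(x ^ k) / k) * x ^ (t - 1)

/-- The k-digamma function, defined via its series representation
`ψ_k(t) = (ln k − γ)/k − 1/t + ∑_{n=1}^∞ t/(nk(nk+t))`. -/
noncomputable def psik (k t : ℝ) : ℝ :=
  (Real.log k - eulerMascheroniConstant) / k - 1 / t +
    ∑' n : ℕ, t / (((n : ℝ) + 1) * k * (((n : ℝ) + 1) * k + t))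

open Filter Set Topology MeasureTheory

theorem gammak_eq_rpow_mul_Gamma {k t : ℝ} (hk : 0 < k) (ht : 0 < t) :
    gammak k t = k ^ (t / k - 1) * Gamma (t / k) := by
  have h := integral_rpow_mul_exp_neg_mul_rpow hk (by linarith : -1 < t - 1) (inv_pos.2 hk)
  rw [sub_add_cancel, inv_rpow hk.le, ← rpow_neg hk.le, neg_div, neg_neg] at h
  rw [gammak, rpow_sub_one hk.ne', div_eq_mul_one_div _ k, ← h]
  refine setIntegral_congr_fun measurableSet_Ioi fun x _ => ?_
  rw [mul_comm, neg_mul, inv_mul_eq_div, neg_div]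

theorem gammak_pos {k t : ℝ} (hk : 0 < k) (ht : 0 < t) : 0 < gammak k t := by
  rw [gammak_eq_rpow_mul_Gamma hk ht]
  exact mul_pos (rpow_pos_of_pos hk _) (Gamma_pos_of_pos (div_pos ht hk))

theorem psik_one_eq (x : ℝ) :
    psik 1 x = -eulerMascheroniConstant - 1 / x +
      ∑' n : ℕ, x / (((n : ℝ) + 1) * ((n : ℝ) + 1 + x)) := by
  simp [psik]

theorem psik_eq_log_add_psik_one_div {k : ℝ} (hk : k ≠ 0) (t : ℝ) :
    psik k t = (log k + psik 1 (t / k)) / k := by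
  have hterm (n : ℕ) : t / (((n : ℝ) + 1) * k * (((n : ℝ) + 1) * k + t)) =
      t / k / (((n : ℝ) + 1) * ((n : ℝ) + 1 + t / k)) / k := by
    rw [div_div, div_div]
    congr 1
    field_simp
  rw [psik, psik_one_eq, tsum_congr hterm, tsum_div_const]
  field_simp
  ring

theorem div_mul_add_le_mul_one_div_sq {x C : ℝ} (n : ℕ) (hx : 0 ≤ x) (hxC : x ≤ C) :
    x / (((n : ℝ) + 1) * ((n : ℝ) + 1 + x)) ≤ C * (1 / ((n : ℝ) + 1) ^ 2) := by
  rw [mul_one_div, sq]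
  exact div_le_div₀ (hx.trans hxC) hxC (by positivity)
    (mul_le_mul_of_nonneg_left (by linarith) (by positivity))

theorem summable_one_div_nat_add_one_sq : Summable fun n : ℕ => 1 / ((n : ℝ) + 1) ^ 2 := by
  exact_mod_cast (summable_nat_add_iff 1).2 (summable_one_div_nat_pow.2 one_lt_two)

theorem hasDerivAt_logGammaSeq {x : ℝ} (hx : 0 < x) (N : ℕ) :
    HasDerivAt (BohrMollerup.logGammaSeq · N)
      (log N - ∑ m ∈ Finset.range (N + 1), (x + m)⁻¹) x := by
  have hlog (m : ℕ) : HasDerivAt (fun y => log (y + m)) (x + m)⁻¹ x := by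
    simpa using ((hasDerivAt_id x).add_const (m : ℝ)).log (by positivity)
  unfold BohrMollerup.logGammaSeq
  simpa using (((hasDerivAt_id x).mul_const (log N)).add_const (log N.factorial)).fun_sub
    (HasDerivAt.fun_sum fun m _ => hlog m)

theorem log_sub_sum_range_inv_eq {x : ℝ} (hx : 0 < x) (N : ℕ) :
    log N - ∑ m ∈ Finset.range (N + 1), (x + m)⁻¹ =
      -(harmonic N - log N) +
        (-1 / x + ∑ n ∈ Finset.range N, x / (((n : ℝ) + 1) * ((n : ℝ) + 1 + x))) := by
  have hterm (n : ℕ) :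
      x / (((n : ℝ) + 1) * ((n : ℝ) + 1 + x)) = ((n : ℝ) + 1)⁻¹ - (x + ↑(n + 1))⁻¹ := by
    push_cast
    field_simp
    ring
  simp only [Finset.sum_range_succ', hterm, Finset.sum_sub_distrib, harmonic]
  push_cast
  ring

theorem hasDerivAt_log_Gamma_s19 {x : ℝ} (hx : 0 < x) :
    HasDerivAt (fun y => log (Gamma y)) (psik 1 x) x := by
  set s := Ioo 0 (x + 1)
  have hseries : TendstoUniformlyOn
      (fun N y => ∑ n ∈ Finset.range N, y / (((n : ℝ) + 1) * ((n : ℝ) + 1 + y)))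
      (fun y => ∑' n : ℕ, y / (((n : ℝ) + 1) * ((n : ℝ) + 1 + y))) atTop s :=
    tendstoUniformlyOn_tsum_nat (summable_one_div_nat_add_one_sq.mul_left (x + 1))
      fun n y hy => by
        rw [norm_of_nonneg (by have := hy.1.le; positivity)]
        exact div_mul_add_le_mul_one_div_sq n hy.1.le hy.2.le
  have hconst : TendstoUniformlyOn (fun (_ : ℕ) (y : ℝ) => -1 / y) (fun y => -1 / y) atTop s :=
    fun u hu => Eventually.of_forall fun _ _ _ => refl_mem_uniformity hu
  have hderiv : TendstoUniformlyOn
      (fun (N : ℕ) (y : ℝ) => log N - ∑ m ∈ Finset.range (N + 1), (y + m)⁻¹) (psik 1) atTop s := by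
    refine ((tendsto_harmonic_sub_log.neg.tendstoUniformlyOn_const s).add
      (hconst.add hseries)).congr ?_ |>.congr_right ?_
    · filter_upwards with N y hy
      exact (log_sub_sum_range_inv_eq hy.1 N).symm
    · intro y _
      simp only [Pi.add_apply, psik_one_eq]
      ring
  exact hasDerivAt_of_tendstoUniformlyOn isOpen_Ioo hderiv
    (Eventually.of_forall fun N y hy => hasDerivAt_logGammaSeq hy.1 N)
    (fun y hy => BohrMollerup.tendsto_log_gamma hy.1) ⟨hx, by linarith⟩

theorem monotoneOn_psik_one : MonotoneOn (psik 1) (Ioi 0) :=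
  (convexOn_log_Gamma.monotoneOn_deriv fun _ hy =>
    (hasDerivAt_log_Gamma_s19 hy).differentiableAt).congr fun _ hy => (hasDerivAt_log_Gamma_s19 hy).deriv

theorem monotoneOn_psik {k : ℝ} (hk : 0 < k) : MonotoneOn (psik k) (Ioi 0) := by
  intro s hs u hu hsu
  rw [psik_eq_log_add_psik_one_div hk.ne', psik_eq_log_add_psik_one_div hk.ne']
  gcongr
  exact monotoneOn_psik_one (div_pos hs hk) (div_pos hu hk) (by gcongr)

theorem hasDerivAt_log_gammak {k t : ℝ} (hk : 0 < k) (ht : 0 < t) :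
    HasDerivAt (fun y => log (gammak k y)) (psik k t) t := by
  have hlog : (fun y => log (gammak k y)) =ᶠ[𝓝 t]
      fun y => (y / k - 1) * log k + log (Gamma (y / k)) := by
    filter_upwards [Ioi_mem_nhds ht] with y hy
    rw [gammak_eq_rpow_mul_Gamma hk hy, log_mul (rpow_pos_of_pos hk _).ne'
      (Gamma_pos_of_pos (div_pos hy hk)).ne', log_rpow hk]
  have hdiv := (hasDerivAt_id t).div_const k
  refine (((hdiv.sub_const 1).mul_const (log k)).add
    ((hasDerivAt_log_Gamma_s19 (div_pos ht hk)).comp t hdiv)).congr_of_eventuallyEq hlog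
    |>.congr_deriv ?_
  rw [psik_eq_log_add_psik_one_div hk.ne']
  ring

theorem antitoneOn_gammak_div {k a b α β : ℝ} (hk : 0 < k) (hb : 0 ≤ b) (hab : a ≤ b)
    (h : ∀ s : ℝ, 0 ≤ s → 0 < a * s + α ∧ a * s + α ≤ b * s + β ∧ 0 < psik k (a * s + α)) :
    AntitoneOn (fun s => gammak k (a * s + α) / gammak k (b * s + β)) (Ici 0) := by
  have hderiv (s : ℝ) (hs : 0 ≤ s) : HasDerivAt
      (fun s => log (gammak k (a * s + α)) - log (gammak k (b * s + β)))
      (a * psik k (a * s + α) - b * psik k (b * s + β)) s := by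
    obtain ⟨hα, hαβ, -⟩ := h s hs
    have hlin (c d : ℝ) : HasDerivAt (fun s => c * s + d) c s := by
      simpa using ((hasDerivAt_id s).const_mul c).add_const d
    refine (((hasDerivAt_log_gammak hk hα).comp s (hlin a α)).fun_sub
      ((hasDerivAt_log_gammak hk (hα.trans_le hαβ)).comp s (hlin b β))).congr_deriv ?_
    ring
  have hlog : AntitoneOn (fun s => log (gammak k (a * s + α)) - log (gammak k (b * s + β)))
      (Ici 0) := by
    refine antitoneOn_of_hasDerivWithinAt_nonpos (convex_Ici 0)
      (fun s hs => (hderiv s hs).continuousAt.continuousWithinAt)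
      (fun s hs => (hderiv s (interior_subset hs)).hasDerivWithinAt) fun s hs => ?_
    obtain ⟨hα, hαβ, hψ⟩ := h s (interior_subset hs)
    have hmono := monotoneOn_psik hk hα (hα.trans_le hαβ) hαβ
    exact sub_nonpos.2 <|
      (mul_le_mul_of_nonneg_right hab hψ.le).trans (mul_le_mul_of_nonneg_left hmono hb)
  refine (exp_monotone.comp_antitoneOn hlog).congr fun s hs => ?_
  obtain ⟨hα, hαβ, -⟩ := h s hs
  simp only [Function.comp_apply, exp_sub, exp_log (gammak_pos hk hα),
    exp_log (gammak_pos hk (hα.trans_le hαβ))]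

theorem X_bounds_general (k : ℝ) (hk : 0 < k) (n : ℕ)
    (a b : ℝ) (α β : Fin n → ℝ) (ha : 0 < a) (hab : a ≤ b)
    (h : ∀ t : ℝ, 0 ≤ t → ∀ i, 0 < a * t + α i ∧ 0 < b * t + β i ∧
      a * t + α i ≤ b * t + β i ∧ 0 < psik k (a * t + α i))
    (t : ℝ) (ht : t ∈ Set.Icc (0 : ℝ) 1) :
    (∏ i, gammak k (a + α i) / gammak k (b + β i)) ≤
        (∏ i, gammak k (a * t + α i) / gammak k (b * t + β i)) ∧
      (∏ i, gammak k (a * t + α i) / gammak k (b * t + β i)) ≤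
        ∏ i, gammak k (α i) / gammak k (β i) := by
  have hanti (i : Fin n) := antitoneOn_gammak_div hk (ha.le.trans hab) hab
    fun s hs => ⟨(h s hs i).1, (h s hs i).2.2⟩
  have hpos (s : ℝ) (hs : 0 ≤ s) (i : Fin n) :
      0 ≤ gammak k (a * s + α i) / gammak k (b * s + β i) :=
    (div_pos (gammak_pos hk (h s hs i).1) (gammak_pos hk (h s hs i).2.1)).le
  obtain ⟨ht0, ht1⟩ := ht
  constructor
  · simpa using Finset.prod_le_prod (fun i _ => hpos 1 zero_le_one i)
      fun i _ => hanti i ht0 (mem_Ici.2 zero_le_one) ht1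
  · simpa using Finset.prod_le_prod (fun i _ => hpos t ht0 i)
      fun i _ => hanti i (mem_Ici.2 le_rfl) ht0 ht0

theorem X_bounds (k : ℝ) (hk : 0 < k) (n : ℕ) (hn : 0 < n)
    (a b : ℝ) (α β : Fin n → ℝ) (ha : 0 < a) (hab : a ≤ b)
    (hα : ∀ i, 0 < α i) (hβ : ∀ i, 0 < β i)
    (h : ∀ t : ℝ, 0 ≤ t → ∀ i, 0 < a * t + α i ∧ 0 < b * t + β i ∧
      a * t + α i ≤ b * t + β i ∧ 0 < psik k (a * t + α i))
    (t : ℝ) (ht : t ∈ Set.Icc (0 : ℝ) 1) :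
    (∏ i, gammak k (a + α i) / gammak k (b + β i)) ≤
        (∏ i, gammak k (a * t + α i) / gammak k (b * t + β i)) ∧
      (∏ i, gammak k (a * t + α i) / gammak k (b * t + β i)) ≤
        ∏ i, gammak k (α i) / gammak k (β i) :=
  X_bounds_general k hk n a b α β ha hab h t ht
end
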